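/- arXiv:0710.3871 — 3 statements merged into one kernel-verified Lean document; each statement's English description precedes it below -/
import Mathlib

section
/- Every finitely generated metabelian Lie algebra A over a field k is finitely presented in the category of metabelian Lie algebras: there exist n : ℕ, a surjective Lie algebra homomorphism π from the free metabelian Lie algebra F(k, Fin n) onto A, and a finite subset S of F(k, Fin n) such that the kernel of π equals the Lie ideal of F(k, Fin n) generated by S. -/
/-- A Lie ring `A` is *metabelian* if `⁅⁅a,b⁆,⁅c,d⁆⁆ = 0` for all `a b c d`. -/
def IsMetabelian (A : Type*) [LieRing A] : Prop :=
  ∀ a b c d : A, ⁅⁅a, b⁆, ⁅c, d⁆⁆ = 0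
/-- The free metabelian Lie algebra on `X` over `k`: the quotient of the free Lie algebra
on `X` by its second derived ideal `⁅⁅L,L⁆,⁅L,L⁆⁆`. -/
abbrev FreeMetabelianLie (k : Type*) (X : Type*) [CommRing k] :=
  FreeLieAlgebra k X ⧸ LieAlgebra.derivedSeries k (FreeLieAlgebra k X) 2

/-- The image in the free metabelian Lie algebra of the generator `x`. -/
noncomputable def fmGen (k : Type*) {X : Type*} [CommRing k] (x : X) :
    FreeMetabelianLie k X :=
  LieSubmodule.Quotient.mk' _ (FreeLieAlgebra.of k x)


/-!
Let `F` be the free metabelian Lie algebra on `x₁, …, xₙ` and `D = ⁅F, F⁆`. Since `D` is abelian,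
the operators `ad xᵢ` commute on `D`, so `D` is a module over the commutative algebra `C` they
generate, which is Noetherian by the Hilbert basis theorem; over `C`, `D` is generated by the
brackets `⁅xᵢ, xⱼ⁆`, while `F ⧸ D` is spanned by the images of the `xᵢ`. Lie submodules of `D` are
`C`-submodules, and by the modular law an ideal of `F` is determined, among the ideals comparable
to it, by its intersection with `D` and its image in `F ⧸ D`. Hence the ideals of `F` satisfy the
ascending chain condition, and the kernel of any surjection from `F` is finitely generated as an
ideal.
-/

open LieAlgebra LieModule

section Metabelian

variable {k L : Type*} [CommRing k] [LieRing L] [LieAlgebra k L]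

theorem IsMetabelian.lie_eq_zero (hL : IsMetabelian L) {x y : L}
    (hx : x ∈ derivedSeries k L 1) (hy : y ∈ derivedSeries k L 1) : ⁅x, y⁆ = 0 := by
  rw [← LieSubmodule.mem_toSubmodule, ← LieIdeal.toLieSubalgebra_toSubmodule,
    coe_derivedSeries_one_eq] at hx hy
  induction hx, hy using Submodule.span_induction₂ with
  | mem_mem x y hx hy =>
    obtain ⟨a, b, rfl⟩ := hx
    obtain ⟨c, d, rfl⟩ := hy
    exact hL a b c d
  | zero_left => exact zero_lie _
  | zero_right => exact lie_zero _
  | add_left _ _ _ _ _ _ h₁ h₂ => rw [add_lie, h₁, h₂, add_zero]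
  | add_right _ _ _ _ _ _ h₁ h₂ => rw [lie_add, h₁, h₂, add_zero]
  | smul_left _ _ _ _ _ h => rw [smul_lie, h, smul_zero]
  | smul_right _ _ _ _ _ h => rw [lie_smul, h, smul_zero]

theorem IsMetabelian.derivedSeries_two_eq_bot (hL : IsMetabelian L) :
    derivedSeries k L 2 = ⊥ := by
  rw [derivedSeries_def, derivedSeriesOfIdeal_succ, LieSubmodule.lie_eq_bot_iff]
  exact fun x hx y hy => hL.lie_eq_zero hx hy

theorem lie_mem_derivedSeries_one (x y : L) : ⁅x, y⁆ ∈ derivedSeries k L 1 :=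
  LieSubmodule.lie_mem_lie (LieSubmodule.mem_top x) (LieSubmodule.mem_top y)

theorem lie_lie_mem_derivedSeries_two (a b c d : L) :
    ⁅⁅a, b⁆, ⁅c, d⁆⁆ ∈ derivedSeries k L 2 :=
  LieSubmodule.lie_mem_lie (lie_mem_derivedSeries_one a b) (lie_mem_derivedSeries_one c d)

theorem IsMetabelian.commute_toEnd (hL : IsMetabelian L) (x y : L) :
    Commute (toEnd k L (derivedSeries k L 1) x) (toEnd k L (derivedSeries k L 1) y) := by
  ext u
  have h := hL.lie_eq_zero (lie_mem_derivedSeries_one x y) u.2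
  simp only [Module.End.mul_apply, toEnd_apply_apply, LieSubmodule.coe_bracket]
  rw [leibniz_lie, h, zero_add]

end Metabelian

namespace LieSubmodule

variable {k L M : Type*} [CommRing k] [LieRing L] [AddCommGroup M] [Module k M]
  [LieRingModule L M]

theorem exists_finset_lieSpan_eq [WellFoundedGT (LieSubmodule k L M)]
    (N : LieSubmodule k L M) : ∃ S : Finset M, lieSpan k L (S : Set M) = N := by
  classical
  obtain ⟨_, ⟨S, hSN, rfl⟩, hmax⟩ := wellFounded_gt.has_min
    {P | ∃ S : Finset M, (S : Set M) ⊆ N ∧ lieSpan k L (S : Set M) = P} ⟨⊥, ∅, by simp⟩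
  refine ⟨S, le_antisymm (lieSpan_le.mpr hSN) fun m hm => ?_⟩
  have hle : lieSpan k L (S : Set M) ≤ lieSpan k L (insert m S : Finset M) :=
    lieSpan_mono (by simp)
  rw [eq_of_le_of_not_lt hle (hmax _ ⟨insert m S, by simp [Set.insert_subset_iff, hm, hSN], rfl⟩)]
  exact subset_lieSpan (by simp)

variable [LieAlgebra k L] [LieModule k L M]

theorem apply_mem_of_mem_adjoin (N : LieSubmodule k L M) {s : Set L} {f : Module.End k M}
    (hf : f ∈ Algebra.adjoin k (toEnd k L M '' s)) {m : M} (hm : m ∈ N) : f m ∈ N := by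
  induction hf using Algebra.adjoin_induction generalizing m with
  | mem f hf => obtain ⟨x, -, rfl⟩ := hf; exact N.lie_mem hm
  | algebraMap r => exact N.smul_mem r hm
  | add f g _ _ hf hg => exact N.add_mem (hf hm) (hg hm)
  | mul f g _ _ hf hg => exact hf (hg hm)

def toAdjoinSubmodule_orderEmbedding (s : Set L) :
    LieSubmodule k L M ↪o Submodule (Algebra.adjoin k (toEnd k L M '' s)) M :=
  OrderEmbedding.ofMapLEIff
    (fun N =>
      { carrier := N
        add_mem' := N.add_mem
        zero_mem' := N.zero_mem
        smul_mem' := fun c _ hm => N.apply_mem_of_mem_adjoin c.2 hm })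
    fun _ _ => Iff.rfl

theorem wellFoundedGT_of_isNoetherian_adjoin (s : Set L)
    [IsNoetherian (Algebra.adjoin k (toEnd k L M '' s)) M] :
    WellFoundedGT (LieSubmodule k L M) :=
  (toAdjoinSubmodule_orderEmbedding s).strictMono.wellFoundedGT

theorem comap_mk'_map_mk' (N P : LieSubmodule k L M) :
    comap (Quotient.mk' N) (map (Quotient.mk' N) P) = P ⊔ N := by
  rw [← toSubmodule_inj, sup_comm]
  exact Submodule.comap_map_mkQ _ _

theorem wellFoundedGT_of_wellFoundedGT_quotient (N : LieSubmodule k L M)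
    [WellFoundedGT (LieSubmodule k L N)] [WellFoundedGT (LieSubmodule k L (M ⧸ N))] :
    WellFoundedGT (LieSubmodule k L M) := by
  refine StrictMono.wellFoundedGT (f := fun P => (comap N.incl P, map (Quotient.mk' N) P))
    fun P Q hPQ => lt_of_le_of_ne ⟨(gc_map_comap _).monotone_u hPQ.le, map_mono hPQ.le⟩
      fun h => hPQ.ne ?_
  obtain ⟨h_inf, h_sup⟩ := Prod.mk.inj h
  refine eq_of_le_of_inf_le_of_sup_le (z := N) hPQ.le ?_ ?_
  · rw [inf_comm Q, inf_comm P, ← map_comap_incl, ← map_comap_incl, h_inf]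
  · rw [← comap_mk'_map_mk', ← comap_mk'_map_mk', h_sup]

end LieSubmodule

open scoped IsMulCommutative in
theorem Algebra.isNoetherianRing_adjoin_of_commute {R A : Type*} [CommRing R] [IsNoetherianRing R]
    [Ring A] [Algebra R A] {t : Set A} (ht : t.Finite)
    (hcomm : ∀ a ∈ t, ∀ b ∈ t, Commute a b) : IsNoetherianRing (Algebra.adjoin R t) := by
  have := Algebra.isMulCommutative_adjoin R hcomm
  have := (Subalgebra.fg_iff_finiteType (Algebra.adjoin R t)).mp
    (Subalgebra.fg_def.mpr ⟨t, ht, rfl⟩)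
  exact Algebra.FiniteType.isNoetherianRing R _

section Generators

variable {k L : Type*} [CommRing k] [LieRing L] [LieAlgebra k L] {s : Set L} {V : Submodule k L}

theorem lie_mem_of_mem_span_union (hV : ∀ a ∈ s ∪ V, ∀ b ∈ s ∪ V, ⁅a, b⁆ ∈ V) {a b : L}
    (ha : a ∈ Submodule.span k (s ∪ V)) (hb : b ∈ Submodule.span k (s ∪ V)) : ⁅a, b⁆ ∈ V := by
  induction ha, hb using Submodule.span_induction₂ with
  | mem_mem a b ha hb => exact hV a ha b hb
  | zero_left => simp
  | zero_right => simp
  | add_left _ _ _ _ _ _ h₁ h₂ => rw [add_lie]; exact V.add_mem h₁ h₂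
  | add_right _ _ _ _ _ _ h₁ h₂ => rw [lie_add]; exact V.add_mem h₁ h₂
  | smul_left t _ _ _ _ h => rw [smul_lie]; exact V.smul_mem t h
  | smul_right t _ _ _ _ h => rw [lie_smul]; exact V.smul_mem t h

theorem span_union_eq_top_of_lie_mem (hs : LieSubalgebra.lieSpan k L s = ⊤)
    (hV : ∀ a ∈ s ∪ V, ∀ b ∈ s ∪ V, ⁅a, b⁆ ∈ V) : Submodule.span k (s ∪ V) = ⊤ := by
  let P : LieSubalgebra k L :=
    { Submodule.span k (s ∪ V) with
      lie_mem' := fun ha hb =>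
        Submodule.subset_span (Or.inr (lie_mem_of_mem_span_union hV ha hb)) }
  have hP : LieSubalgebra.lieSpan k L s ≤ P :=
    LieSubalgebra.lieSpan_le.mpr fun a ha => Submodule.subset_span (Or.inl ha)
  rw [hs, top_le_iff] at hP
  exact congrArg LieSubalgebra.toSubmodule hP

theorem derivedSeries_one_le_of_lie_mem (hs : LieSubalgebra.lieSpan k L s = ⊤)
    (hV : ∀ a ∈ s ∪ V, ∀ b ∈ s ∪ V, ⁅a, b⁆ ∈ V) : (derivedSeries k L 1).toSubmodule ≤ V := by
  rw [← LieIdeal.toLieSubalgebra_toSubmodule, coe_derivedSeries_one_eq, Submodule.span_le]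
  rintro _ ⟨a, b, rfl⟩
  have htop := span_union_eq_top_of_lie_mem hs hV
  exact lie_mem_of_mem_span_union hV (htop ▸ Submodule.mem_top) (htop ▸ Submodule.mem_top)

end Generators

section FinitelyGenerated

variable {k L : Type*} [CommRing k] [LieRing L] [LieAlgebra k L] {s : Set L}

theorem finite_quotient_derivedSeries_one (hs : LieSubalgebra.lieSpan k L s = ⊤)
    (hfin : s.Finite) : Module.Finite k (L ⧸ derivedSeries k L 1) := by
  have htop := span_union_eq_top_of_lie_mem hs (V := (derivedSeries k L 1).toSubmodule)
    fun a _ b _ => lie_mem_derivedSeries_one a b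
  rw [Submodule.span_union, Submodule.span_eq, sup_comm, ← Submodule.map_mkQ_eq_top,
    Submodule.map_span] at htop
  exact ⟨Submodule.fg_def.mpr ⟨_, hfin.image _, htop⟩⟩

theorem IsMetabelian.finite_derivedSeries_one (hL : IsMetabelian L)
    (hs : LieSubalgebra.lieSpan k L s = ⊤) (hfin : s.Finite) :
    Module.Finite (Algebra.adjoin k (toEnd k L (derivedSeries k L 1) '' s))
      (derivedSeries k L 1) := by
  set D := derivedSeries k L 1
  set T : Set D := Set.image2 (fun a b => ⟨⁅a, b⁆, lie_mem_derivedSeries_one a b⟩) s s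
  set N := Submodule.span (Algebra.adjoin k (toEnd k L D '' s)) T
  set V := (N.restrictScalars k).map (D.incl : D →ₗ[k] L)
  have hgen : ∀ a ∈ s, ∀ b ∈ V, ⁅a, b⁆ ∈ V := by
    rintro a ha _ ⟨u, hu, rfl⟩
    exact ⟨_, N.smul_mem ⟨toEnd k L D a, Algebra.subset_adjoin ⟨a, ha, rfl⟩⟩ hu, rfl⟩
  have hV : ∀ a ∈ s ∪ V, ∀ b ∈ s ∪ V, ⁅a, b⁆ ∈ V := by
    rintro a (ha | ha) b (hb | hb)
    · exact ⟨_, Submodule.subset_span (Set.mem_image2_of_mem ha hb), rfl⟩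
    · exact hgen a ha b hb
    · rw [← lie_skew]
      exact V.neg_mem (hgen b hb a ha)
    · obtain ⟨u, -, rfl⟩ := ha
      obtain ⟨v, -, rfl⟩ := hb
      convert V.zero_mem
      exact hL.lie_eq_zero u.2 v.2
  refine ⟨Submodule.fg_def.mpr ⟨T, hfin.image2 _ hfin, eq_top_iff.mpr fun u _ => ?_⟩⟩
  obtain ⟨v, hv, huv⟩ := derivedSeries_one_le_of_lie_mem hs hV u.2
  rwa [← Subtype.ext huv]

theorem IsMetabelian.wellFoundedGT_lieIdeal [IsNoetherianRing k] (hL : IsMetabelian L)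
    (hs : LieSubalgebra.lieSpan k L s = ⊤) (hfin : s.Finite) : WellFoundedGT (LieIdeal k L) := by
  have := Algebra.isNoetherianRing_adjoin_of_commute (R := k)
      (hfin.image (toEnd k L (derivedSeries k L 1))) <| by
    rintro _ ⟨x, -, rfl⟩ _ ⟨y, -, rfl⟩
    exact hL.commute_toEnd x y
  have := hL.finite_derivedSeries_one hs hfin
  have := finite_quotient_derivedSeries_one hs hfin
  have := LieSubmodule.wellFoundedGT_of_isNoetherian_adjoin (k := k)
    (M := derivedSeries k L 1) s
  exact LieSubmodule.wellFoundedGT_of_wellFoundedGT_quotient (derivedSeries k L 1)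

end FinitelyGenerated

namespace FreeMetabelianLie

variable (k : Type*) [CommRing k] (X : Type*)

noncomputable def mk : FreeLieAlgebra k X →ₗ⁅k⁆ FreeMetabelianLie k X :=
  { (derivedSeries k (FreeLieAlgebra k X) 2).toSubmodule.mkQ with map_lie' := rfl }

theorem mk_surjective : Function.Surjective (mk k X) :=
  Submodule.mkQ_surjective _

theorem isMetabelian : IsMetabelian (FreeMetabelianLie k X) := by
  intro a b c d
  obtain ⟨a, rfl⟩ := mk_surjective k X a
  obtain ⟨b, rfl⟩ := mk_surjective k X b
  obtain ⟨c, rfl⟩ := mk_surjective k X c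
  obtain ⟨d, rfl⟩ := mk_surjective k X d
  simp only [← LieHom.map_lie]
  exact (Submodule.Quotient.mk_eq_zero _).mpr (lie_lie_mem_derivedSeries_two a b c d)

theorem lieSpan_range_fmGen :
    LieSubalgebra.lieSpan k (FreeMetabelianLie k X) (Set.range (fmGen k)) = ⊤ := by
  set K := LieSubalgebra.lieSpan k (FreeMetabelianLie k X) (Set.range (fmGen k))
  let ψ : FreeLieAlgebra k X →ₗ⁅k⁆ K :=
    FreeLieAlgebra.lift k fun x => ⟨fmGen k x, LieSubalgebra.subset_lieSpan ⟨x, rfl⟩⟩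
  have hψ : K.incl.comp ψ = mk k X :=
    FreeLieAlgebra.hom_ext fun x => congrArg Subtype.val (FreeLieAlgebra.lift_of_apply _ x)
  refine eq_top_iff.mpr fun z _ => ?_
  obtain ⟨x, rfl⟩ := mk_surjective k X z
  rw [← hψ]
  exact (ψ x).2

variable {k X} {A : Type*} [LieRing A] [LieAlgebra k A]

noncomputable def lift (hA : IsMetabelian A) (f : X → A) : FreeMetabelianLie k X →ₗ⁅k⁆ A :=
  have hker : derivedSeries k (FreeLieAlgebra k X) 2 ≤ (FreeLieAlgebra.lift k f).ker :=
    LieIdeal.map_eq_bot_iff.mp <| eq_bot_iff.mpr <|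
      hA.derivedSeries_two_eq_bot (k := k) ▸ LieIdeal.derivedSeries_map_le 2
  { Submodule.liftQ _ (FreeLieAlgebra.lift k f : FreeLieAlgebra k X →ₗ[k] A) hker with
    map_lie' := by
      rintro ⟨x⟩ ⟨y⟩
      exact (FreeLieAlgebra.lift k f).map_lie x y }

theorem lift_fmGen (hA : IsMetabelian A) (f : X → A) (x : X) : lift hA f (fmGen k x) = f x :=
  FreeLieAlgebra.lift_of_apply f x

end FreeMetabelianLie

/-- Every finitely generated metabelian Lie algebra is finitely presented in the category
of metabelian Lie algebras. -/
theorem finitely_presented_of_fg_metabelian {k A : Type*} [Field k] [LieRing A]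
    [LieAlgebra k A] (hA : IsMetabelian A)
    (hfg : ∃ S : Finset A, LieSubalgebra.lieSpan k A ↑S = ⊤) :
    ∃ (n : ℕ) (π : FreeMetabelianLie k (Fin n) →ₗ⁅k⁆ A)
      (S : Finset (FreeMetabelianLie k (Fin n))),
      Function.Surjective π ∧
      π.ker = LieSubmodule.lieSpan k (FreeMetabelianLie k (Fin n)) ↑S := by
  obtain ⟨S₀, hS₀⟩ := hfg
  let π := FreeMetabelianLie.lift (k := k) hA fun i => (S₀.equivFin.symm i : A)
  have hπ : Function.Surjective π := by
    rw [← LieHom.range_eq_top, eq_top_iff, ← hS₀, LieSubalgebra.lieSpan_le]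
    intro a ha
    exact ⟨fmGen k (S₀.equivFin ⟨a, ha⟩), by simp [π, FreeMetabelianLie.lift_fmGen]⟩
  have := (FreeMetabelianLie.isMetabelian k (Fin S₀.card)).wellFoundedGT_lieIdeal
    (FreeMetabelianLie.lieSpan_range_fmGen k (Fin S₀.card)) (Set.finite_range _)
  obtain ⟨S, hS⟩ := π.ker.exists_finset_lieSpan_eq
  exact ⟨_, π, S, hπ, hS.symm⟩
end

section
/- Let k be a field, let X be a type with at least two elements, and let F = F(k, X) be the free metabelian Lie algebra on X over k (which is then non-abelian). Then the Fitting radical of F equals its derived ideal: Fit(F) = ⁅F, F⁆. -/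
/-- The Fitting radical of a Lie algebra: the supremum of all nilpotent Lie ideals,
i.e. the Lie ideal generated by the union of all nilpotent Lie ideals. -/
noncomputable def fittingRadical (k A : Type*) [CommRing k] [LieRing A] [LieAlgebra k A] :
    LieIdeal k A :=
  sSup {I : LieIdeal k A | LieRing.IsNilpotent I}
/-!
The derived ideal `F'` is abelian because `F'' = 0`, so it is a nilpotent ideal. Conversely, every
element `a` of a nilpotent ideal has nilpotent `ad a`. If `a ∉ F'`, some generator `x` occurs in
`a` with a nonzero coefficient `c`; choose a generator `y ≠ x` and map `F` onto the Lie algebra of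
the affine line by `x ↦ (1, 0)`, `y ↦ (0, 1)`. The image of `a` acts on `(0, 1)` as multiplication
by `c`, so no power of `ad a` kills `a_y`.
-/

open LieAlgebra

attribute [local instance] LieRing.ofAssociativeRing

instance {R : Type*} [CommRing R] : IsLieAbelian R :=
  isMulCommutative_iff_isLieAbelian.1 inferInstance

section General

variable {R L L' : Type*} [CommRing R] [LieRing L] [LieAlgebra R L] [LieRing L'] [LieAlgebra R L']

theorem LieHom.map_ad_pow (f : L →ₗ⁅R⁆ L') (x y : L) (n : ℕ) :
    f ((ad R L x ^ n) y) = (ad R L' (f x) ^ n) (f y) := by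
  have h : (ad R L' (f x)).comp (f : L →ₗ[R] L') = (f : L →ₗ[R] L').comp (ad R L x) := by
    ext; simp
  exact (LinearMap.congr_fun (Module.End.commute_pow_left_of_commute h n) y).symm

theorem LieHom.derivedSeries_one_le_ker [IsLieAbelian L'] (f : L →ₗ⁅R⁆ L') :
    derivedSeries R L 1 ≤ f.ker := by
  rw [derivedSeries_def, derivedSeriesOfIdeal_succ, LieSubmodule.lie_le_iff]
  intro x _ y _
  rw [LieHom.mem_ker, f.map_lie, trivial_lie_zero]

theorem LieIdeal.isNilpotent_ad_of_mem {I : LieIdeal R L} [LieRing.IsNilpotent I] {a : L}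
    (ha : a ∈ I) : IsNilpotent (ad R L a) := by
  obtain ⟨n, hn⟩ := nilpotent_ad_of_nilpotent_algebra R I
  refine ⟨n + 1, LinearMap.ext fun z => ?_⟩
  have h := LieSubmodule.coe_toEnd_pow R L L I a ⟨⁅a, z⁆, lie_mem_left R L I a z ha⟩ n
  change ((ad R I ⟨a, ha⟩ ^ n) ⟨⁅a, z⁆, _⟩ : L) = (ad R L a ^ n) ⁅a, z⁆ at h
  rw [pow_succ, Module.End.mul_apply, ad_apply, ← h, hn]
  rfl

def LieIdeal.mkQ (I : LieIdeal R L) : L →ₗ⁅R⁆ L ⧸ I :=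
  { (I : Submodule R L).mkQ with map_lie' := rfl }

theorem LieIdeal.mkQ_surjective (I : LieIdeal R L) : Function.Surjective I.mkQ :=
  LieSubmodule.Quotient.surjective_mk' (R := R) (L := L) (M := L) I

theorem LieIdeal.ker_mkQ (I : LieIdeal R L) : I.mkQ.ker = I := by
  ext; exact LieSubmodule.Quotient.mk_eq_zero (N := I)

theorem LieAlgebra.derivedSeries_quotient_derivedSeries_eq_bot (n : ℕ) :
    derivedSeries R (L ⧸ derivedSeries R L n) n = ⊥ := by
  rw [← LieIdeal.derivedSeries_map_eq n (LieIdeal.mkQ_surjective _), LieIdeal.map_eq_bot_iff,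
    LieIdeal.ker_mkQ]

theorem le_fittingRadical (I : LieIdeal R L) [LieRing.IsNilpotent I] : I ≤ fittingRadical R L :=
  le_sSup ‹_›

theorem fittingRadical_le_of_forall_isNilpotent_ad {J : LieIdeal R L}
    (h : ∀ a : L, IsNilpotent (ad R L a) → a ∈ J) : fittingRadical R L ≤ J :=
  sSup_le fun I (_ : LieRing.IsNilpotent I) _ ha => h _ (LieIdeal.isNilpotent_ad_of_mem ha)

end General

/-- The Lie algebra of the affine group of the line. -/
@[ext]
structure Aff (R : Type*) where
  fst : R
  snd : R

namespace Aff

variable {R : Type*} [CommRing R]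

def equivProd : Aff R ≃ R × R where
  toFun u := (u.fst, u.snd)
  invFun p := ⟨p.1, p.2⟩

instance : AddCommGroup (Aff R) := equivProd.addCommGroup
instance : Module R (Aff R) := equivProd.module R

instance : Bracket (Aff R) (Aff R) where
  bracket u v := ⟨0, u.fst * v.snd - v.fst * u.snd⟩

@[simp] theorem add_fst (u v : Aff R) : (u + v).fst = u.fst + v.fst := rfl
@[simp] theorem add_snd (u v : Aff R) : (u + v).snd = u.snd + v.snd := rfl
@[simp] theorem smul_fst (t : R) (u : Aff R) : (t • u).fst = t * u.fst := rfl
@[simp] theorem smul_snd (t : R) (u : Aff R) : (t • u).snd = t * u.snd := rfl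
@[simp] theorem zero_fst : (0 : Aff R).fst = 0 := rfl
@[simp] theorem zero_snd : (0 : Aff R).snd = 0 := rfl
@[simp] theorem lie_fst (u v : Aff R) : ⁅u, v⁆.fst = 0 := rfl
@[simp] theorem lie_snd (u v : Aff R) : ⁅u, v⁆.snd = u.fst * v.snd - v.fst * u.snd := rfl

instance : LieRing (Aff R) where
  add_lie _ _ _ := by ext <;> simp; ring
  lie_add _ _ _ := by ext <;> simp; ring
  lie_self _ := by ext <;> simp
  leibniz_lie _ _ _ := by ext <;> simp; ring

instance : LieAlgebra R (Aff R) where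
  lie_smul _ _ _ := by ext <;> simp; ring

def fstHom : Aff R →ₗ⁅R⁆ R where
  toFun := fst
  map_add' := add_fst
  map_smul' := smul_fst
  map_lie' := by simp [LieRing.of_associative_ring_bracket, mul_comm]

theorem fst_eq_zero_of_mem_derivedSeries_one {u : Aff R} (hu : u ∈ derivedSeries R (Aff R) 1) :
    u.fst = 0 :=
  fstHom.derivedSeries_one_le_ker hu

theorem derivedSeries_two_eq_bot : derivedSeries R (Aff R) 2 = ⊥ := by
  rw [eq_bot_iff, derivedSeries_def, derivedSeriesOfIdeal_succ, LieSubmodule.lie_le_iff]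
  intro u hu v hv
  ext <;> simp [fst_eq_zero_of_mem_derivedSeries_one hu, fst_eq_zero_of_mem_derivedSeries_one hv]

theorem ad_pow_apply (u : Aff R) (n : ℕ) : (ad R (Aff R) u ^ n) ⟨0, 1⟩ = ⟨0, u.fst ^ n⟩ := by
  induction n with
  | zero => simp
  | succ n ih =>
    rw [pow_succ', Module.End.mul_apply, ih]
    ext <;> simp [pow_succ']

end Aff

namespace FreeLieAlgebra

variable {R X : Type*} [CommRing R]

theorem lieSpan_range_of :
    LieSubalgebra.lieSpan R (FreeLieAlgebra R X) (Set.range (of R)) = ⊤ := by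
  set S := LieSubalgebra.lieSpan R (FreeLieAlgebra R X) (Set.range (of R))
  let g : FreeLieAlgebra R X →ₗ⁅R⁆ S :=
    lift R fun x => ⟨of R x, LieSubalgebra.subset_lieSpan ⟨x, rfl⟩⟩
  have hg : S.incl.comp g = LieHom.id := hom_ext fun x => by simp [g]
  refine eq_top_iff.2 fun z _ => ?_
  have hz : (g z : FreeLieAlgebra R X) = z := congr($hg z)
  exact hz ▸ (g z).2

theorem span_range_of_sup_derivedSeries_one :
    Submodule.span R (Set.range (of R)) ⊔
      (derivedSeries R (FreeLieAlgebra R X) 1 : Submodule R (FreeLieAlgebra R X)) = ⊤ := by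
  let S : LieSubalgebra R (FreeLieAlgebra R X) :=
    { Submodule.span R (Set.range (of R)) ⊔
        (derivedSeries R (FreeLieAlgebra R X) 1 : Submodule R (FreeLieAlgebra R X)) with
      lie_mem' := fun {x y} _ _ => Submodule.mem_sup_right <| by
        rw [derivedSeries_def, derivedSeriesOfIdeal_succ, derivedSeriesOfIdeal_zero]
        exact LieSubmodule.lie_mem_lie (LieSubmodule.mem_top x) (LieSubmodule.mem_top y) }
  have hS : LieSubalgebra.lieSpan R _ (Set.range (of R)) ≤ S :=
    LieSubalgebra.lieSpan_le.2 fun _ hx => Submodule.mem_sup_left (Submodule.subset_span hx)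
  rw [lieSpan_range_of] at hS
  exact eq_top_iff.2 fun z _ => hS (LieSubalgebra.mem_top z)

variable [DecidableEq X]

noncomputable def coeff (x : X) : FreeLieAlgebra R X →ₗ⁅R⁆ R :=
  lift R (Pi.single x 1)

theorem coeff_linearCombination_of (x : X) (c : X →₀ R) :
    coeff x (Finsupp.linearCombination R (of R) c) = c x := by
  simp [coeff, Finsupp.linearCombination_apply, map_finsuppSum, Pi.single_apply]

theorem coeff_eq_zero_of_mem_derivedSeries_one (x : X) {a : FreeLieAlgebra R X}
    (ha : a ∈ derivedSeries R (FreeLieAlgebra R X) 1) : coeff x a = 0 :=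
  (coeff x).derivedSeries_one_le_ker ha

theorem exists_coeff_ne_zero_of_notMem_derivedSeries_one {a : FreeLieAlgebra R X}
    (ha : a ∉ derivedSeries R (FreeLieAlgebra R X) 1) : ∃ x, coeff x a ≠ 0 := by
  by_contra! h
  have hmem : a ∈ _ := span_range_of_sup_derivedSeries_one (R := R) (X := X) ▸ Submodule.mem_top
  obtain ⟨s, hs, d, hd, rfl⟩ := Submodule.mem_sup.1 hmem
  rw [← Finsupp.range_linearCombination] at hs
  obtain ⟨c, rfl⟩ := hs
  have hc : c = 0 := Finsupp.ext fun x => by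
    simpa [coeff_eq_zero_of_mem_derivedSeries_one x hd, coeff_linearCombination_of] using h x
  exact ha (by simpa [hc] using hd)

theorem ad_pow_apply_notMem_derivedSeries_two [NoZeroDivisors R] {x y : X} (hxy : x ≠ y)
    {a : FreeLieAlgebra R X} (ha : coeff x a ≠ 0) (n : ℕ) :
    (ad R _ a ^ n) (of R y) ∉ derivedSeries R (FreeLieAlgebra R X) 2 := by
  intro h
  let φ : FreeLieAlgebra R X →ₗ⁅R⁆ Aff R :=
    lift R fun z => if z = x then ⟨1, 0⟩ else if z = y then ⟨0, 1⟩ else 0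
  have hφa : (φ a).fst = coeff x a := by
    have : Aff.fstHom.comp φ = coeff x := hom_ext fun z => by
      by_cases hzx : z = x <;> by_cases hzy : z = y <;>
        simp [φ, coeff, hzx, hzy, hxy.symm, Aff.fstHom]
    exact congr($this a)
  have hφy : φ (of R y) = ⟨0, 1⟩ := by simp [φ, hxy.symm]
  have h0 : φ ((ad R _ a ^ n) (of R y)) = 0 := by
    have := LieIdeal.derivedSeries_map_le (f := φ) 2 (LieIdeal.mem_map h)
    rwa [Aff.derivedSeries_two_eq_bot, LieSubmodule.mem_bot] at this
  rw [φ.map_ad_pow, hφy, Aff.ad_pow_apply, hφa] at h0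
  exact pow_ne_zero n ha (by simpa using congr(Aff.snd $h0))

end FreeLieAlgebra

namespace FreeMetabelianLie

variable {R X : Type*} [CommRing R]

instance isLieAbelian_derivedSeries_one :
    IsLieAbelian (derivedSeries R (FreeMetabelianLie R X) 1) :=
  (abelian_iff_derived_succ_eq_bot ⊤ 1).2 (derivedSeries_quotient_derivedSeries_eq_bot 2)

theorem mem_derivedSeries_one_of_isNilpotent_ad [NoZeroDivisors R] [Nontrivial X]
    {a : FreeMetabelianLie R X} (ha : IsNilpotent (ad R _ a)) :
    a ∈ derivedSeries R (FreeMetabelianLie R X) 1 := by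
  classical
  set J := derivedSeries R (FreeLieAlgebra R X) 2
  obtain ⟨a, rfl⟩ := J.mkQ_surjective a
  obtain ⟨n, hn⟩ := ha
  by_contra ha'
  have haL : a ∉ derivedSeries R (FreeLieAlgebra R X) 1 := fun h =>
    ha' (LieIdeal.derivedSeries_map_le (f := J.mkQ) 1 (LieIdeal.mem_map h))
  obtain ⟨x, hx⟩ := FreeLieAlgebra.exists_coeff_ne_zero_of_notMem_derivedSeries_one haL
  obtain ⟨y, hyx⟩ := exists_ne x
  have hmem : (ad R _ a ^ n) (FreeLieAlgebra.of R y) ∈ J := by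
    rw [← J.ker_mkQ, LieHom.mem_ker, J.mkQ.map_ad_pow, hn, LinearMap.zero_apply]
  exact FreeLieAlgebra.ad_pow_apply_notMem_derivedSeries_two hyx.symm hx n hmem

end FreeMetabelianLie

/-- The Fitting radical of a non-abelian free metabelian Lie algebra (on a type with at
least two elements) equals its derived ideal. -/
theorem fittingRadical_freeMetabelian {k X : Type*} [Field k] [Nontrivial X] :
    fittingRadical k (FreeMetabelianLie k X) =
      LieAlgebra.derivedSeries k (FreeMetabelianLie k X) 1 :=
  le_antisymm
    (fittingRadical_le_of_forall_isNilpotent_ad fun _ =>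
      FreeMetabelianLie.mem_derivedSeries_one_of_isNilpotent_ad)
    (le_fittingRadical _)
end

section
/- Let k be a field and let F = F(k, X) be the free metabelian Lie algebra on a type X over k. Then for all x, y, z ∈ F: (1) if ⁅⁅x, y⁆, x⁆ = 0 and ⁅⁅x, y⁆, y⁆ = 0, then ⁅x, y⁆ = 0; (2) if ⁅x, y⁆ = 0, ⁅x, z⁆ = 0 and x ≠ 0, then ⁅y, z⁆ = 0. -/
/-!
Both properties hold in the Lie algebra `V ⋉ M` in which `V` is abelian and acts on a torsion-free
module `M` over a domain `A` through an injective linear map `ι : V → A`: there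
`⁅(a, f), (b, g)⁆ = (0, ι a • g - ι b • f)`, and both claims reduce to the absence of zero divisors.
So it suffices to embed `F(k, X)` into such an algebra, and the Magnus embedding `a_x ↦ (e_x, e_x)`
into `k^(X) ⋉ k[X]^(X)` is one.

For injectivity, note that the derived ideal `N` of `F` is a `k[X]`-module, the generators acting
by commuting endomorphisms because `⁅N, N⁆ = 0`; the second component of the embedding is
`k[X]`-linear on `N` and sends `⁅a_x, a_y⁆` to `X_x e_y - X_y e_x`. Let `W ⊆ N` be the `k`-span of
the elements `X^β • ⁅a_x, a_y⁆`. The span of the generators plus `W` is a Lie subalgebra, hence all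
of `F`, so an element whose first component vanishes lies in `W`. On `W` the second component has a
left inverse: send `X^β e_y` to `X^(β - e_m) • ⁅a_m, a_y⁆`, where `m` is a variable of `X^β X_y`
chosen as a function of that monomial alone. Then `X^(β + e_x) e_y` and `X^(β + e_y) e_x` use the
same `m`, and Jacobi's identity shows that the difference of their images is `X^β • ⁅a_x, a_y⁆`.
-/

@[ext] structure MagnusAlgebra {R A V : Type*} [CommRing R] [CommRing A] [Algebra R A]
    [AddCommGroup V] [Module R V] (ι : V →ₗ[R] A) (M : Type*) where
  fst : V
  snd : M

namespace MagnusAlgebra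

variable {R A V M : Type*} [CommRing R] [CommRing A] [Algebra R A] [AddCommGroup V] [Module R V]
  [AddCommGroup M] {ι : V →ₗ[R] A}

def equivProd : MagnusAlgebra ι M ≃ V × M where
  toFun p := (p.fst, p.snd)
  invFun p := ⟨p.1, p.2⟩

instance : AddCommGroup (MagnusAlgebra ι M) := equivProd.addCommGroup

@[simp] lemma fst_zero : (0 : MagnusAlgebra ι M).fst = 0 := rfl
@[simp] lemma snd_zero : (0 : MagnusAlgebra ι M).snd = 0 := rfl
@[simp] lemma fst_add (p q : MagnusAlgebra ι M) : (p + q).fst = p.fst + q.fst := rfl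
@[simp] lemma snd_add (p q : MagnusAlgebra ι M) : (p + q).snd = p.snd + q.snd := rfl

section Module

variable [Module R M]

instance : Module R (MagnusAlgebra ι M) := equivProd.module R

@[simp] lemma fst_smul (t : R) (p : MagnusAlgebra ι M) : (t • p).fst = t • p.fst := rfl
@[simp] lemma snd_smul (t : R) (p : MagnusAlgebra ι M) : (t • p).snd = t • p.snd := rfl

end Module

variable [Module A M]

instance : Bracket (MagnusAlgebra ι M) (MagnusAlgebra ι M) where
  bracket p q := ⟨0, ι p.fst • q.snd - ι q.fst • p.snd⟩

@[simp] lemma fst_lie (p q : MagnusAlgebra ι M) : ⁅p, q⁆.fst = 0 := rfl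
@[simp] lemma snd_lie (p q : MagnusAlgebra ι M) :
    ⁅p, q⁆.snd = ι p.fst • q.snd - ι q.fst • p.snd := rfl

instance : LieRing (MagnusAlgebra ι M) where
  add_lie _ _ _ := by ext <;> simp [add_smul, smul_add]; abel
  lie_add _ _ _ := by ext <;> simp [add_smul, smul_add]; abel
  lie_self _ := by ext <;> simp
  leibniz_lie _ _ _ := by ext <;> simp [smul_sub, smul_smul, mul_comm]

lemma lie_eq_zero_of_fst_eq_zero {p q : MagnusAlgebra ι M} (hp : p.fst = 0) (hq : q.fst = 0) :
    ⁅p, q⁆ = 0 := by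
  ext <;> simp [hp, hq]

section TorsionFree

variable [IsDomain A] [Module.IsTorsionFree A M]

lemma lie_eq_zero_iff_of_fst_eq_zero (hι : Function.Injective ι) {c p : MagnusAlgebra ι M}
    (hc : c.fst = 0) : ⁅c, p⁆ = 0 ↔ p.fst = 0 ∨ c = 0 := by
  have hc' : c = 0 ↔ c.snd = 0 := ⟨fun h => h ▸ rfl, fun h => by ext <;> simp [hc, h]⟩
  have hcp : ⁅c, p⁆ = 0 ↔ ⁅c, p⁆.snd = 0 := ⟨fun h => h ▸ rfl, fun h => by ext <;> simp [h]⟩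
  rw [hcp, hc', snd_lie, hc, map_zero, zero_smul, zero_sub, neg_eq_zero, smul_eq_zero,
    map_eq_zero_iff ι hι]

theorem lie_eq_zero_of_lie_lie_eq_zero (hι : Function.Injective ι) {p q : MagnusAlgebra ι M}
    (hp : ⁅⁅p, q⁆, p⁆ = 0) (hq : ⁅⁅p, q⁆, q⁆ = 0) : ⁅p, q⁆ = 0 := by
  rw [lie_eq_zero_iff_of_fst_eq_zero hι (fst_lie p q)] at hp hq
  by_contra hpq
  exact hpq (lie_eq_zero_of_fst_eq_zero (hp.resolve_right hpq) (hq.resolve_right hpq))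

theorem lie_eq_zero_of_lie_eq_zero_of_ne_zero (hι : Function.Injective ι)
    {p q r : MagnusAlgebra ι M} (hq : ⁅p, q⁆ = 0) (hr : ⁅p, r⁆ = 0) (hp : p ≠ 0) :
    ⁅q, r⁆ = 0 := by
  by_cases hp₁ : p.fst = 0
  · rw [lie_eq_zero_iff_of_fst_eq_zero hι hp₁] at hq hr
    exact lie_eq_zero_of_fst_eq_zero (hq.resolve_right hp) (hr.resolve_right hp)
  · have hqrp : ⁅⁅q, r⁆, p⁆ = 0 := by
      rw [← lie_skew, leibniz_lie, hq, hr, zero_lie, lie_zero, add_zero, neg_zero]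
    exact ((lie_eq_zero_iff_of_fst_eq_zero hι (fst_lie q r)).1 hqrp).resolve_left hp₁

end TorsionFree

variable [Module R M] [IsScalarTower R A M]

instance : LieAlgebra R (MagnusAlgebra ι M) where
  lie_smul t p q := by ext <;> simp [smul_sub, smul_comm t]

def fiberIdeal : LieIdeal R (MagnusAlgebra ι M) where
  carrier := {p | p.fst = 0}
  add_mem' hp hq := by simp_all
  zero_mem' := rfl
  smul_mem' t p hp := by simp_all
  lie_mem _ := rfl

lemma derivedSeries_one_le_fiberIdeal :
    LieAlgebra.derivedSeries R (MagnusAlgebra ι M) 1 ≤ fiberIdeal := by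
  rw [LieAlgebra.derivedSeries_def, LieAlgebra.derivedSeriesOfIdeal_succ,
    LieAlgebra.derivedSeriesOfIdeal_zero, LieSubmodule.lie_le_iff]
  exact fun _ _ _ _ => rfl

lemma derivedSeries_two_eq_bot : LieAlgebra.derivedSeries R (MagnusAlgebra ι M) 2 = ⊥ := by
  rw [eq_bot_iff, LieAlgebra.derivedSeries_def, LieAlgebra.derivedSeriesOfIdeal_succ,
    ← LieAlgebra.derivedSeries_def, LieSubmodule.lie_le_iff]
  intro p hp q hq
  rw [lie_eq_zero_of_fst_eq_zero (derivedSeries_one_le_fiberIdeal hp)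
    (derivedSeries_one_le_fiberIdeal hq)]
  exact zero_mem _

end MagnusAlgebra

namespace LieIdeal

variable {R L L' : Type*} [CommRing R] [LieRing L] [LieAlgebra R L] [LieRing L'] [LieAlgebra R L']

def quotientMk (I : LieIdeal R L) : L →ₗ⁅R⁆ L ⧸ I :=
  { I.toSubmodule.mkQ with map_lie' := rfl }

lemma quotientMk_surjective (I : LieIdeal R L) : Function.Surjective I.quotientMk :=
  Submodule.mkQ_surjective _

def quotientLift (I : LieIdeal R L) (f : L →ₗ⁅R⁆ L') (h : I ≤ f.ker) : L ⧸ I →ₗ⁅R⁆ L' :=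
  { I.toSubmodule.liftQ f.toLinearMap h with
    map_lie' := by
      rintro ⟨u⟩ ⟨v⟩
      exact f.map_lie u v }

end LieIdeal

lemma lie_mem_span_of_forall_lie_mem {R L M : Type*} [CommRing R] [LieRing L] [LieAlgebra R L]
    [AddCommGroup M] [Module R M] [LieRingModule L M] [LieModule R L M] {s : Set L} {t T : Set M}
    (h : ∀ a ∈ s, ∀ m ∈ t, ⁅a, m⁆ ∈ T) {a : L} {m : M} (ha : a ∈ Submodule.span R s)
    (hm : m ∈ Submodule.span R t) : ⁅a, m⁆ ∈ Submodule.span R T := by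
  let B : L →ₗ[R] M →ₗ[R] M := LinearMap.mk₂ R (⁅·, ·⁆) add_lie smul_lie lie_add lie_smul
  have hle : Submodule.map₂ B (Submodule.span R s) (Submodule.span R t) ≤ Submodule.span R T := by
    rw [Submodule.map₂_span_span]
    exact Submodule.span_mono (Set.image2_subset_iff.2 h)
  exact hle (Submodule.apply_mem_map₂ B ha hm)

namespace MvPolynomial

variable {R σ A : Type*} [CommRing R] [Ring A] [Algebra R A]

open scoped IsMulCommutative in
noncomputable def aevalOfCommute (f : σ → A) (hf : ∀ i j, Commute (f i) (f j)) :
    MvPolynomial σ R →ₐ[R] A :=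
  have : IsMulCommutative (Algebra.adjoin R (Set.range f)) :=
    Algebra.isMulCommutative_adjoin R (by rintro _ ⟨i, rfl⟩ _ ⟨j, rfl⟩; exact hf i j)
  (Algebra.adjoin R (Set.range f)).val.comp
    (aeval fun i => ⟨f i, Algebra.subset_adjoin (Set.mem_range_self i)⟩)

@[simp] lemma aevalOfCommute_X (f : σ → A) (hf : ∀ i j, Commute (f i) (f j)) (i : σ) :
    aevalOfCommute (R := R) f hf (X i) = f i := by
  simp [aevalOfCommute]

end MvPolynomial

namespace FreeMetabelianLie

open LieAlgebra MvPolynomial Submodule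

variable {k σ : Type*} [CommRing k]

variable (k σ) in
noncomputable abbrev derivedIdeal : LieIdeal k (FreeMetabelianLie k σ) :=
  derivedSeries k (FreeMetabelianLie k σ) 1

lemma derivedSeries_two_eq_bot : derivedSeries k (FreeMetabelianLie k σ) 2 = ⊥ := by
  rw [← LieIdeal.derivedSeries_map_eq 2 (LieIdeal.quotientMk_surjective _),
    LieIdeal.map_eq_bot_iff]
  exact fun _ ha => LieSubmodule.Quotient.mk_eq_zero'.2 ha

lemma lie_mem_derivedIdeal (u v : FreeMetabelianLie k σ) : ⁅u, v⁆ ∈ derivedIdeal k σ :=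
  LieSubmodule.lie_mem_lie (LieSubmodule.mem_top u) (LieSubmodule.mem_top v)

lemma lie_eq_zero_of_mem_derivedIdeal {u v : FreeMetabelianLie k σ} (hu : u ∈ derivedIdeal k σ)
    (hv : v ∈ derivedIdeal k σ) : ⁅u, v⁆ = 0 := by
  have h : ⁅u, v⁆ ∈ derivedSeries k (FreeMetabelianLie k σ) 2 := LieSubmodule.lie_mem_lie hu hv
  rwa [derivedSeries_two_eq_bot, LieSubmodule.mem_bot] at h

lemma eq_top_of_fmGen_mem {S : LieSubalgebra k (FreeMetabelianLie k σ)}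
    (hS : ∀ x, fmGen k x ∈ S) : S = ⊤ := by
  let ψ : FreeLieAlgebra k σ →ₗ⁅k⁆ S := FreeLieAlgebra.lift k fun x => ⟨fmGen k x, hS x⟩
  have hψ : S.incl.comp ψ = LieIdeal.quotientMk _ :=
    FreeLieAlgebra.hom_ext fun x => by simp [ψ]; rfl
  rw [eq_top_iff]
  rintro u -
  obtain ⟨a, rfl⟩ := LieIdeal.quotientMk_surjective _ u
  rw [← hψ]
  exact (ψ a).2

variable (k σ) in
abbrev Magnus :=
  MagnusAlgebra (Finsupp.linearCombination k (X : σ → MvPolynomial σ k)) (σ →₀ MvPolynomial σ k)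

variable (k σ) in
noncomputable def magnusEmbedding : FreeMetabelianLie k σ →ₗ⁅k⁆ Magnus k σ :=
  let f := FreeLieAlgebra.lift k fun x : σ => (⟨Finsupp.single x 1, Finsupp.single x 1⟩ : Magnus k σ)
  LieIdeal.quotientLift _ f <| by
    rw [← LieIdeal.map_eq_bot_iff, ← le_bot_iff, ← MagnusAlgebra.derivedSeries_two_eq_bot]
    exact LieIdeal.derivedSeries_map_le (f := f) 2

@[simp] lemma magnusEmbedding_fmGen (x : σ) :
    magnusEmbedding k σ (fmGen k x) = ⟨Finsupp.single x 1, Finsupp.single x 1⟩ :=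
  FreeLieAlgebra.lift_of_apply _ x

lemma fst_magnusEmbedding_linearCombination (a : σ →₀ k) :
    (magnusEmbedding k σ (Finsupp.linearCombination k (fmGen k) a)).fst = a := by
  induction a using Finsupp.induction_linear with
  | zero => simp
  | add a b ha hb => simp [ha, hb]
  | single x c => simp

lemma fst_magnusEmbedding_eq_zero {u : FreeMetabelianLie k σ} (hu : u ∈ derivedIdeal k σ) :
    (magnusEmbedding k σ u).fst = 0 :=
  MagnusAlgebra.derivedSeries_one_le_fiberIdeal <|
    LieIdeal.derivedSeries_map_le (f := magnusEmbedding k σ) 1 (LieIdeal.mem_map hu)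

lemma commute_toEnd_fmGen (x y : σ) :
    Commute (LieModule.toEnd k _ (derivedIdeal k σ) (fmGen k x))
      (LieModule.toEnd k _ (derivedIdeal k σ) (fmGen k y)) := by
  ext n
  change ⁅fmGen k x, ⁅fmGen k y, (n : FreeMetabelianLie k σ)⁆⁆ =
    ⁅fmGen k y, ⁅fmGen k x, (n : FreeMetabelianLie k σ)⁆⁆
  rw [leibniz_lie, lie_eq_zero_of_mem_derivedIdeal (lie_mem_derivedIdeal _ _) n.2, zero_add]

variable (k) in
noncomputable def polyAction : MvPolynomial σ k →ₐ[k] Module.End k (derivedIdeal k σ) :=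
  aevalOfCommute (fun x => LieModule.toEnd k _ (derivedIdeal k σ) (fmGen k x)) commute_toEnd_fmGen

lemma coe_polyAction_X_apply (x : σ) (n : derivedIdeal k σ) :
    (polyAction k (X x) n : FreeMetabelianLie k σ) = ⁅fmGen k x, (n : FreeMetabelianLie k σ)⁆ := by
  rw [polyAction, aevalOfCommute_X]
  rfl

lemma polyAction_monomial_add_single (β : σ →₀ ℕ) (x : σ) (n : derivedIdeal k σ) :
    polyAction k (monomial (β + Finsupp.single x 1) 1) n =
      polyAction k (monomial β 1) (polyAction k (X x) n) := by
  rw [monomial_add_single, pow_one, map_mul, Module.End.mul_apply]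

variable (k) in
noncomputable def bracketGen (x y : σ) : derivedIdeal k σ :=
  ⟨⁅fmGen k x, fmGen k y⁆, lie_mem_derivedIdeal _ _⟩

lemma bracketGen_self (x : σ) : bracketGen k x x = 0 := by
  ext; simp [bracketGen]

lemma bracketGen_swap (x y : σ) : bracketGen k y x = -bracketGen k x y := by
  ext; simp [bracketGen]

lemma polyAction_X_bracketGen_sub (m x y : σ) :
    polyAction k (X x) (bracketGen k m y) - polyAction k (X y) (bracketGen k m x) =
      polyAction k (X m) (bracketGen k x y) := by
  ext
  simp only [LieSubmodule.coe_sub, coe_polyAction_X_apply, bracketGen]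
  rw [leibniz_lie (fmGen k m), ← lie_skew ⁅fmGen k m, fmGen k x⁆]
  abel

variable (k σ) in
def monomialBrackets : Set (FreeMetabelianLie k σ) :=
  {u | ∃ (β : σ →₀ ℕ) (x y : σ),
    u = (polyAction k (monomial β 1) (bracketGen k x y) : FreeMetabelianLie k σ)}

lemma lie_fmGen_mem_monomialBrackets (z : σ) {u : FreeMetabelianLie k σ}
    (hu : u ∈ monomialBrackets k σ) : ⁅fmGen k z, u⁆ ∈ monomialBrackets k σ := by
  obtain ⟨β, x, y, rfl⟩ := hu
  refine ⟨Finsupp.single z 1 + β, x, y, ?_⟩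
  rw [← coe_polyAction_X_apply, monomial_single_add, pow_one, map_mul, Module.End.mul_apply]

lemma fmGen_lie_fmGen_mem_monomialBrackets (x y : σ) :
    ⁅fmGen k x, fmGen k y⁆ ∈ monomialBrackets k σ :=
  ⟨0, x, y, by simp [bracketGen]⟩

lemma span_monomialBrackets_le : span k (monomialBrackets k σ) ≤ (derivedIdeal k σ).toSubmodule :=
  span_le.2 fun _ ⟨_, _, _, hu⟩ => hu ▸ Subtype.prop _

lemma lie_mem_span_monomialBrackets {u v : FreeMetabelianLie k σ}
    (hu : u ∈ span k (Set.range (fmGen k)) ⊔ span k (monomialBrackets k σ))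
    (hv : v ∈ span k (Set.range (fmGen k)) ⊔ span k (monomialBrackets k σ)) :
    ⁅u, v⁆ ∈ span k (monomialBrackets k σ) := by
  have hgen {a b : FreeMetabelianLie k σ} (ha : a ∈ span k (Set.range (fmGen k))) (hb : b ∈ span k (Set.range (fmGen k))) :
      ⁅a, b⁆ ∈ span k (monomialBrackets k σ) := by
    refine lie_mem_span_of_forall_lie_mem ?_ ha hb
    rintro _ ⟨x, rfl⟩ _ ⟨y, rfl⟩
    exact fmGen_lie_fmGen_mem_monomialBrackets x y
  have hact {a w : FreeMetabelianLie k σ} (ha : a ∈ span k (Set.range (fmGen k)))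
      (hw : w ∈ span k (monomialBrackets k σ)) : ⁅a, w⁆ ∈ span k (monomialBrackets k σ) := by
    refine lie_mem_span_of_forall_lie_mem ?_ ha hw
    rintro _ ⟨z, rfl⟩ _ hw
    exact lie_fmGen_mem_monomialBrackets z hw
  obtain ⟨a, ha, w, hw, rfl⟩ := mem_sup.1 hu
  obtain ⟨b, hb, w', hw', rfl⟩ := mem_sup.1 hv
  rw [add_lie, lie_add, lie_add, ← lie_skew w b, lie_eq_zero_of_mem_derivedIdeal
    (span_monomialBrackets_le hw) (span_monomialBrackets_le hw'), add_zero]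
  exact add_mem (add_mem (hgen ha hb) (hact ha hw')) (neg_mem (hact hb hw))

lemma mem_span_fmGen_sup_span_monomialBrackets (u : FreeMetabelianLie k σ) :
    u ∈ span k (Set.range (fmGen k)) ⊔ span k (monomialBrackets k σ) := by
  let S : LieSubalgebra k (FreeMetabelianLie k σ) :=
    { span k (Set.range (fmGen k)) ⊔ span k (monomialBrackets k σ) with
      lie_mem' := fun hu hv => mem_sup_right (lie_mem_span_monomialBrackets hu hv) }
  have hS : S = ⊤ := eq_top_of_fmGen_mem fun x => mem_sup_left (subset_span ⟨x, rfl⟩)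
  have hu : u ∈ S := hS ▸ LieSubalgebra.mem_top u
  exact hu

lemma mem_span_monomialBrackets_of_fst_eq_zero {u : FreeMetabelianLie k σ}
    (hu : (magnusEmbedding k σ u).fst = 0) : u ∈ span k (monomialBrackets k σ) := by
  obtain ⟨g, hg, w, hw, rfl⟩ := mem_sup.1 (mem_span_fmGen_sup_span_monomialBrackets u)
  rw [← Finsupp.range_linearCombination] at hg
  obtain ⟨a, rfl⟩ := hg
  have ha : a = 0 := by
    simpa [fst_magnusEmbedding_linearCombination,
      fst_magnusEmbedding_eq_zero (span_monomialBrackets_le hw)] using hu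
  simpa [ha] using hw

lemma snd_magnusEmbedding_polyAction_X (x : σ) (n : derivedIdeal k σ) :
    (magnusEmbedding k σ (polyAction k (X x) n)).snd =
      (X x : MvPolynomial σ k) • (magnusEmbedding k σ n).snd := by
  simp [coe_polyAction_X_apply, fst_magnusEmbedding_eq_zero n.2]

lemma snd_magnusEmbedding_polyAction (r : MvPolynomial σ k) (n : derivedIdeal k σ) :
    (magnusEmbedding k σ (polyAction k r n)).snd = r • (magnusEmbedding k σ n).snd := by
  induction r using MvPolynomial.induction_on generalizing n with
  | C a =>
    rw [← algebraMap_eq, AlgHom.commutes, Module.algebraMap_end_apply, algebraMap_smul]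
    simp
  | add p q hp hq => simp [hp, hq, add_smul]
  | mul_X p x hp =>
    rw [map_mul, Module.End.mul_apply, hp, snd_magnusEmbedding_polyAction_X, smul_smul]

lemma snd_magnusEmbedding_monomialBracket (β : σ →₀ ℕ) (x y : σ) :
    (magnusEmbedding k σ (polyAction k (monomial β 1) (bracketGen k x y))).snd =
      Finsupp.single y (monomial (β + Finsupp.single x 1) 1) -
        Finsupp.single x (monomial (β + Finsupp.single y 1) 1) := by
  have hxy : (magnusEmbedding k σ (bracketGen k x y)).snd =
      Finsupp.single y (X x) - Finsupp.single x (X y) := by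
    simp [bracketGen]
  rw [snd_magnusEmbedding_polyAction, hxy, smul_sub, Finsupp.smul_single, Finsupp.smul_single,
    smul_eq_mul, smul_eq_mul, monomial_add_single, monomial_add_single, pow_one, pow_one]

lemma mem_support_add_single {β : σ →₀ ℕ} {m x : σ} (h : m ∈ (β + Finsupp.single x 1).support) :
    m ∈ β.support ∨ m = x := by
  by_cases hm : m = x
  · exact .inr hm
  · left
    simpa [Finsupp.single_apply, Ne.symm hm] using h

noncomputable def pivot (y : σ) (β : σ →₀ ℕ) : σ :=
  (Finsupp.support_nonempty_iff.2 (by simp : β + Finsupp.single y 1 ≠ 0)).choose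

lemma pivot_mem_support (y : σ) (β : σ →₀ ℕ) : pivot y β ∈ (β + Finsupp.single y 1).support :=
  Exists.choose_spec _

lemma pivot_comm (x y : σ) (β : σ →₀ ℕ) :
    pivot y (β + Finsupp.single x 1) = pivot x (β + Finsupp.single y 1) := by
  simp only [pivot, add_right_comm β]

variable (k) in
noncomputable def retractionTerm (y : σ) (β : σ →₀ ℕ) : derivedIdeal k σ :=
  polyAction k (monomial (β - Finsupp.single (pivot y β) 1) 1) (bracketGen k (pivot y β) y)

lemma retractionTerm_sub (x y : σ) (β : σ →₀ ℕ) :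
    retractionTerm k y (β + Finsupp.single x 1) - retractionTerm k x (β + Finsupp.single y 1) =
      polyAction k (monomial β 1) (bracketGen k x y) := by
  have hm := pivot_mem_support y (β + Finsupp.single x 1)
  rw [retractionTerm, retractionTerm, ← pivot_comm x y β]
  generalize pivot y (β + Finsupp.single x 1) = m at hm ⊢
  rcases mem_support_add_single hm with hm | rfl
  · rcases mem_support_add_single hm with hm | rfl
    · have hle : Finsupp.single m 1 ≤ β :=
        Finsupp.single_le_iff.2 (Nat.one_le_iff_ne_zero.2 (Finsupp.mem_support_iff.1 hm))
      rw [← tsub_add_eq_add_tsub hle, ← tsub_add_eq_add_tsub hle, polyAction_monomial_add_single,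
        polyAction_monomial_add_single, ← map_sub, polyAction_X_bracketGen_sub,
        ← polyAction_monomial_add_single, tsub_add_cancel_of_le hle]
    · rw [add_tsub_cancel_right, bracketGen_self, map_zero, sub_zero]
  · rw [add_tsub_cancel_right, bracketGen_self, map_zero, zero_sub, bracketGen_swap, map_neg,
      neg_neg]

variable (k σ) in
noncomputable def retraction : (σ →₀ MvPolynomial σ k) →ₗ[k] derivedIdeal k σ :=
  Finsupp.lsum k fun y => (basisMonomials σ k).constr k (retractionTerm k y)

lemma retraction_single_monomial (y : σ) (β : σ →₀ ℕ) :
    retraction k σ (Finsupp.single y (monomial β 1)) = retractionTerm k y β := by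
  rw [retraction, Finsupp.lsum_single]
  exact (basisMonomials σ k).constr_basis k _ β

lemma retraction_snd_magnusEmbedding {u : FreeMetabelianLie k σ}
    (hu : u ∈ span k (monomialBrackets k σ)) :
    (retraction k σ (magnusEmbedding k σ u).snd : FreeMetabelianLie k σ) = u := by
  induction hu using span_induction with
  | mem _ h =>
    obtain ⟨β, x, y, rfl⟩ := h
    rw [snd_magnusEmbedding_monomialBracket, map_sub, retraction_single_monomial,
      retraction_single_monomial, retractionTerm_sub]
  | zero => simp
  | add u v _ _ hu hv => simp [hu, hv]
  | smul c u _ hu => simp [hu]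

theorem magnusEmbedding_injective : Function.Injective (magnusEmbedding k σ) := by
  refine (injective_iff_map_eq_zero _).2 fun u hu => ?_
  have hu' : u ∈ span k (monomialBrackets k σ) :=
    mem_span_monomialBrackets_of_fst_eq_zero (by rw [hu]; rfl)
  rw [← retraction_snd_magnusEmbedding hu', hu]
  simp

end FreeMetabelianLie

/-- In a free metabelian Lie algebra: (1) if `⁅⁅x,y⁆,x⁆ = 0` and `⁅⁅x,y⁆,y⁆ = 0` then
`⁅x,y⁆ = 0`; (2) if `⁅x,y⁆ = 0`, `⁅x,z⁆ = 0` and `x ≠ 0` then `⁅y,z⁆ = 0`. -/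
theorem freeMetabelian_bracket_properties {k X : Type*} [Field k]
    (x y z : FreeMetabelianLie k X) :
    (⁅⁅x, y⁆, x⁆ = 0 → ⁅⁅x, y⁆, y⁆ = 0 → ⁅x, y⁆ = 0) ∧
    (⁅x, y⁆ = 0 → ⁅x, z⁆ = 0 → x ≠ 0 → ⁅y, z⁆ = 0) := by
  set φ := FreeMetabelianLie.magnusEmbedding k X
  have hφ {u} : φ u = 0 ↔ u = 0 := map_eq_zero_iff φ FreeMetabelianLie.magnusEmbedding_injective
  have hι := MvPolynomial.linearIndependent_X (R := k) (σ := X)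
  refine ⟨fun hx hy => ?_, fun hy hz hx => ?_⟩
  · rw [← hφ] at hx hy ⊢
    simp only [LieHom.map_lie] at hx hy ⊢
    exact MagnusAlgebra.lie_eq_zero_of_lie_lie_eq_zero hι hx hy
  · rw [← hφ] at hy hz ⊢
    simp only [LieHom.map_lie] at hy hz ⊢
    exact MagnusAlgebra.lie_eq_zero_of_lie_eq_zero_of_ne_zero hι hy hz (hφ.not.2 hx)
end
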